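/- arXiv:1604.02228 — 3 statements merged into one kernel-verified Lean document; each statement's English description precedes it below -/
import Mathlib

section
/- Let C ⊆ 2^ω be a comeager set. Then there is a continuous map f : 2^ω → 2^ω × 2^ω, f = (f_0, f_1), such that for all x: f_0(x) ∈ C, f_1(x) ∈ C, and f_0(x) Δ f_1(x) = x, where Δ is pointwise symmetric difference (XOR). -/
namespace Stmt8T

def emb (m : ℕ) (v : Fin m → Bool) : ℕ → Bool := fun j => if h : j < m then v ⟨j, h⟩ else false
def restr (m : ℕ) (x : ℕ → Bool) : Fin m → Bool := fun i => x i
def extn (m : ℕ) (x : ℕ → Bool) : ℕ → Bool := emb m (restr m x)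
def Agree (m : ℕ) (y z : ℕ → Bool) : Prop := ∀ n < m, y n = z n
def xorf (a b : ℕ → Bool) : ℕ → Bool := fun n => xor (a n) (b n)

lemma restr_extn {m m' : ℕ} (h : m ≤ m') (x : ℕ → Bool) : restr m (extn m' x) = restr m x := by
  funext i; simp [restr, extn, emb, Nat.lt_of_lt_of_le i.isLt h]
lemma agree_mono {m m' : ℕ} {y z : ℕ → Bool} (h : m ≤ m') (ha : Agree m' y z) : Agree m y z :=
  fun n hn => ha n (hn.trans_le h)
lemma agree_trans {m : ℕ} {y z w : ℕ → Bool} (h1 : Agree m y z) (h2 : Agree m z w) :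
    Agree m y w := fun n hn => (h1 n hn).trans (h2 n hn)
lemma agree_symm {m : ℕ} {y z : ℕ → Bool} (h : Agree m y z) : Agree m z y :=
  fun n hn => (h n hn).symm
lemma isOpen_cyl (m : ℕ) (w : ℕ → Bool) : IsOpen {z : ℕ → Bool | Agree m z w} := by
  have : {z : ℕ → Bool | Agree m z w} = ⋂ n ∈ Finset.range m, (fun z : ℕ → Bool => z n) ⁻¹' {w n} := by
    ext z; simp [Agree]
  rw [this]
  exact isOpen_biInter_finset fun n _ => (continuous_apply n).isOpen_preimage _ (isOpen_discrete _)
lemma cyl_subset {U : Set (ℕ → Bool)} (hU : IsOpen U) {y : ℕ → Bool} (hy : y ∈ U) :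
    ∃ m, ∀ z, Agree m z y → z ∈ U := by
  obtain ⟨I, u, hu, hsub⟩ := isOpen_pi_iff.1 hU y hy
  refine ⟨I.sup id + 1, fun z hz => hsub fun a ha => ?_⟩
  have : z a = y a := hz a (Nat.lt_succ_of_le (Finset.le_sup (f := id) ha))
  rw [this]; exact (hu a ha).2

lemma step1 (U : Set (ℕ → Bool)) (hU : IsOpen U) (hD : Dense U) (N m : ℕ)
    (g : (ℕ → Bool) → (ℕ → Bool)) (hg : ∀ x, Agree m (g x) (g (extn m x))) :
    ∃ (m' : ℕ) (g' : (ℕ → Bool) → (ℕ → Bool)), m ≤ m' ∧ N ≤ m' ∧ (∀ x, g' x = g' (extn m' x)) ∧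
      (∀ x, Agree m (g' x) (g x)) ∧ ∀ x y, Agree m' y (g' x) → y ∈ U := by
  have hch : ∀ v : Fin m → Bool, ∃ y, y ∈ {z | Agree m z (g (emb m v))} ∧ y ∈ U := by
    intro v
    have := hD.inter_open_nonempty _ (isOpen_cyl m (g (emb m v)))
      ⟨g (emb m v), fun n _ => rfl⟩
    obtain ⟨y, hy1, hy2⟩ := this
    exact ⟨y, hy1, hy2⟩
  choose Y hYa hYU using hch
  choose l hl using fun v => cyl_subset hU (hYU v)
  refine ⟨max (max m N) (Finset.univ.sup l), fun x => Y (restr m x), ?_, ?_, ?_, ?_, ?_⟩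
  · exact le_max_of_le_left (le_max_left _ _)
  · exact le_max_of_le_left (le_max_right _ _)
  · intro x
    show Y (restr m x) = Y (restr m (extn _ x))
    rw [restr_extn (le_max_of_le_left (le_max_left _ _))]
  · intro x
    have h1 : Agree m (Y (restr m x)) (g (emb m (restr m x))) := hYa (restr m x)
    exact agree_trans h1 (agree_symm (hg x))
  · intro x y hy
    refine hl (restr m x) y fun n hn => hy n ?_
    exact hn.trans_le (le_max_of_le_right (Finset.le_sup (Finset.mem_univ _)))

lemma step2 (U : Set (ℕ → Bool)) (hU : IsOpen U) (hD : Dense U) (N m : ℕ)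
    (g : (ℕ → Bool) → (ℕ → Bool)) (hg : ∀ x, Agree m (g x) (g (extn m x))) :
    ∃ (m' : ℕ) (g' : (ℕ → Bool) → (ℕ → Bool)), m ≤ m' ∧ N ≤ m' ∧ (∀ x, Agree m' (g' x) (g' (extn m' x))) ∧
      (∀ x, Agree m (g' x) (g x)) ∧ ∀ x y, Agree m' y (xorf (g' x) x) → y ∈ U := by
  have hG : ∀ x, Agree m (xorf (g x) x) (xorf (g (extn m x)) (extn m x)) := by
    intro x n hn
    simp only [xorf]
    rw [hg x n hn]
    congr 1
    simp [extn, emb, restr, hn]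
  obtain ⟨m', G', hm, hN, hdep, hagr, hmem⟩ := step1 U hU hD N m _ hG
  refine ⟨m', fun x => xorf (G' x) x, hm, hN, ?_, ?_, ?_⟩
  · intro x n hn
    simp only [xorf]
    rw [hdep x]
    congr 1
    simp [extn, emb, restr, hn]
  · intro x n hn
    have h1 : G' x n = xor (g x n) (x n) := hagr x n hn
    simp only [xorf, h1]
    cases g x n <;> cases x n <;> rfl
  · intro x y hy
    refine hmem x y fun n hn => ?_
    have := hy n hn
    simp only [xorf] at this ⊢
    rw [this]
    cases G' x n <;> cases x n <;> rfl

lemma stage (U : Set (ℕ → Bool)) (hU : IsOpen U) (hD : Dense U) (m : ℕ)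
    (g : (ℕ → Bool) → (ℕ → Bool)) (hg : ∀ x, Agree m (g x) (g (extn m x))) :
    ∃ (m' : ℕ) (g' : (ℕ → Bool) → (ℕ → Bool)), m < m' ∧ (∀ x, Agree m' (g' x) (g' (extn m' x))) ∧
      (∀ x, Agree m (g' x) (g x)) ∧ (∀ x y, Agree m' y (g' x) → y ∈ U) ∧
      ∀ x y, Agree m' y (xorf (g' x) x) → y ∈ U := by
  obtain ⟨m1, g1, hm1, hN1, hdep1, hagr1, hmem1⟩ := step1 U hU hD (m + 1) m g hg
  have hg1 : ∀ x, Agree m1 (g1 x) (g1 (extn m1 x)) := fun x n hn => by rw [hdep1 x]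
  obtain ⟨m2, g2, hm2, hN2, hdep2, hagr2, hmem2⟩ := step2 U hU hD (m + 1) m1 g1 hg1
  refine ⟨m2, g2, lt_of_lt_of_le (Nat.lt_succ_self m) hN2, hdep2, ?_, ?_, hmem2⟩
  · intro x
    exact agree_trans (agree_mono hm1 (hagr2 x)) (hagr1 x)
  · intro x y hy
    refine hmem1 x y ?_
    exact agree_trans (agree_mono hm2 hy) (hagr2 x)


theorem stmt_8 (C : Set (ℕ → Bool)) (hC : C ∈ residual (ℕ → Bool)) :
    ∃ f : (ℕ → Bool) → (ℕ → Bool) × (ℕ → Bool), Continuous f ∧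
      ∀ x : ℕ → Bool, (f x).1 ∈ C ∧ (f x).2 ∈ C ∧
        (fun n => xor ((f x).1 n) ((f x).2 n)) = x := by
  classical
  obtain ⟨S, hSo, hSd, hSc, hSsub⟩ := mem_residual_iff.1 hC
  obtain ⟨U, hUrange⟩ := (hSc.insert Set.univ).exists_eq_range ⟨Set.univ, Set.mem_insert _ _⟩
  have hUo : ∀ k, IsOpen (U k) := by
    intro k
    have : U k ∈ insert Set.univ S := hUrange ▸ Set.mem_range_self k
    rcases this with h | h
    · rw [h]; exact isOpen_univ
    · exact hSo _ h
  have hUd : ∀ k, Dense (U k) := by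
    intro k
    have : U k ∈ insert Set.univ S := hUrange ▸ Set.mem_range_self k
    rcases this with h | h
    · rw [h]; exact dense_univ
    · exact hSd _ h
  -- the recursive construction
  set T := {p : ℕ × ((ℕ → Bool) → (ℕ → Bool)) //
    ∀ x, Agree p.1 (p.2 x) (p.2 (extn p.1 x))} with hT
  have step : ∀ (k : ℕ) (p : T), ∃ q : T, p.1.1 < q.1.1 ∧
      (∀ x, Agree p.1.1 (q.1.2 x) (p.1.2 x)) ∧
      (∀ x y, Agree q.1.1 y (q.1.2 x) → y ∈ U k) ∧
      (∀ x y, Agree q.1.1 y (xorf (q.1.2 x) x) → y ∈ U k) := by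
    intro k p
    obtain ⟨m', g', hlt, hdep, hagr, hmem1, hmem2⟩ :=
      stage (U k) (hUo k) (hUd k) p.1.1 p.1.2 p.2
    exact ⟨⟨(m', g'), hdep⟩, hlt, hagr, hmem1, hmem2⟩
  choose nxt h1 h2 h3 h4 using step
  set seq : ℕ → T := fun k =>
    Nat.rec ⟨(0, fun _ _ => false), fun x n hn => absurd hn (Nat.not_lt_zero n)⟩
      (fun k p => nxt k p) k with hseq
  set m : ℕ → ℕ := fun k => (seq k).1.1 with hm
  set g : ℕ → (ℕ → Bool) → (ℕ → Bool) := fun k => (seq k).1.2 with hgdef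
  have hseqsucc : ∀ k, seq (k + 1) = nxt k (seq k) := fun k => rfl
  have mlt : ∀ k, m k < m (k + 1) := by
    intro k
    have := h1 k (seq k)
    rwa [← hseqsucc k] at this
  have mmono : StrictMono m := strictMono_nat_of_lt_succ mlt
  have hmk : ∀ k, k ≤ m k := by
    intro k
    induction k with
    | zero => exact Nat.zero_le _
    | succ k ih => exact Nat.succ_le_of_lt (lt_of_le_of_lt ih (mlt k))
  have hgdep : ∀ k x, Agree (m k) (g k x) (g k (extn (m k) x)) := fun k x => (seq k).2 x
  have hstepagr : ∀ k x, Agree (m k) (g (k + 1) x) (g k x) := by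
    intro k x
    have := h2 k (seq k) x
    rwa [← hseqsucc k] at this
  have hstep3 : ∀ k x y, Agree (m (k + 1)) y (g (k + 1) x) → y ∈ U k := by
    intro k
    have := h3 k (seq k)
    rwa [← hseqsucc k] at this
  have hstep4 : ∀ k x y, Agree (m (k + 1)) y (xorf (g (k + 1) x) x) → y ∈ U k := by
    intro k
    have := h4 k (seq k)
    rwa [← hseqsucc k] at this
  have chain : ∀ j k, j ≤ k → ∀ x, Agree (m j) (g k x) (g j x) := by
    intro j k hjk
    induction k, hjk using Nat.le_induction with
    | base => exact fun x n hn => rfl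
    | succ k hjk ih =>
      intro x
      exact agree_trans (agree_mono (mmono.monotone hjk) (hstepagr k x)) (ih x)
  set f0 : (ℕ → Bool) → (ℕ → Bool) := fun x n => g (n + 1) x n with hf0
  have hagree : ∀ k x, Agree (m k) (f0 x) (g k x) := by
    intro k x n hn
    have e1 : g (max k (n + 1)) x n = g k x n := chain k _ (le_max_left _ _) x n hn
    have e2 : g (max k (n + 1)) x n = g (n + 1) x n :=
      chain (n + 1) _ (le_max_right _ _) x n (lt_of_lt_of_le (Nat.lt_succ_self n) (hmk (n + 1)))
    calc f0 x n = g (n + 1) x n := rfl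
      _ = g (max k (n + 1)) x n := e2.symm
      _ = g k x n := e1
  have memU1 : ∀ k x, f0 x ∈ U k := fun k x => hstep3 k x (f0 x) (hagree (k + 1) x)
  have memU2 : ∀ k x, xorf (f0 x) x ∈ U k := by
    intro k x
    refine hstep4 k x _ fun n hn => ?_
    simp only [xorf]
    rw [hagree (k + 1) x n hn]
  have memC : ∀ (y : ℕ → Bool), (∀ k, y ∈ U k) → y ∈ C := by
    intro y hy
    refine hSsub fun t ht => ?_
    have : t ∈ Set.range U := hUrange ▸ Set.mem_insert_iff.2 (Or.inr ht)
    obtain ⟨k, rfl⟩ := this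
    exact hy k
  have contf0 : Continuous f0 := by
    refine continuous_pi fun n => ?_
    have key : ∀ x, f0 x n = g (n + 1) (emb (m (n + 1)) (restr (m (n + 1)) x)) n := by
      intro x
      have hn : n < m (n + 1) := lt_of_lt_of_le (Nat.lt_succ_self n) (hmk (n + 1))
      exact hgdep (n + 1) x n hn
    have : Continuous fun x : ℕ → Bool =>
        g (n + 1) (emb (m (n + 1)) (restr (m (n + 1)) x)) n := by
      exact Continuous.comp
        (continuous_of_discreteTopology :
          Continuous fun v : Fin (m (n + 1)) → Bool => g (n + 1) (emb (m (n + 1)) v) n)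
        (continuous_pi fun i : Fin (m (n + 1)) => continuous_apply (i : ℕ))
    exact this.congr fun x => (key x).symm
  refine ⟨fun x => (f0 x, xorf (f0 x) x), ?_, ?_⟩
  · refine Continuous.prodMk contf0 ?_
    refine continuous_pi fun n => ?_
    have : Continuous fun x : ℕ → Bool => ((f0 x n, x n) : Bool × Bool) :=
      ((continuous_apply n).comp contf0).prodMk (continuous_apply n)
    exact (Continuous.comp
      (continuous_of_discreteTopology : Continuous fun p : Bool × Bool => xor p.1 p.2)
      this).congr fun x => rfl
  · intro x
    refine ⟨memC _ (fun k => memU1 k x), memC _ (fun k => memU2 k x), ?_⟩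
    funext n
    show xor (f0 x n) (xor (f0 x n) (x n)) = x n
    cases f0 x n <;> cases x n <;> rfl

end Stmt8T

/-- For every comeager `C ⊆ 2^ω` there is a continuous map `f = (f₀, f₁)` on Cantor space
with both coordinates in `C` and with pointwise symmetric difference `f₀(x) Δ f₁(x) = x`. -/
theorem stmt_8 (C : Set (ℕ → Bool)) (hC : C ∈ residual (ℕ → Bool)) :
    ∃ f : (ℕ → Bool) → (ℕ → Bool) × (ℕ → Bool), Continuous f ∧
      ∀ x : ℕ → Bool, (f x).1 ∈ C ∧ (f x).2 ∈ C ∧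
        (fun n => xor ((f x).1 n) ((f x).2 n)) = x := by
  exact Stmt8T.stmt_8 C hC
end

section
/- For each n, k ∈ ℕ let A_{n,k}, B_{n,k} be disjoint Σ^0_α subsets of a Polish space X_{n,k}. Define A = {x ∈ ∏ X_{n,k} : ∃m ∀n>m ∃j ∀k>j, x(n,k) ∈ A_{n,k}} and B analogously with B_{n,k}. Then there exist disjoint Σ^0_{α+2} subsets A*, B* of ∏ X_{n,k} with A ⊆ A* and B ⊆ B*. -/
/-- The additive Borel pointclass `Σ⁰_ξ` on a topological space: `Σ⁰₁`-sets are the open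
sets, and for larger `ξ`, `Σ⁰_ξ`-sets are countable unions of complements of sets lying in
lower levels of the hierarchy. -/
def SigmaZero (α : Type*) [TopologicalSpace α] (ξ : Ordinal.{0}) : Set (Set α) :=
  {s | IsOpen s} ∪
    {s | ∃ g : ℕ → {o : Ordinal.{0} // o < ξ}, ∃ f : ℕ → Set α,
      (∀ n, (f n)ᶜ ∈ SigmaZero α (g n)) ∧ s = ⋃ n, f n}
termination_by ξ
decreasing_by exact (g n).2

open Set

section Aux

variable {α : Type*} [TopologicalSpace α] {β : Type*} [TopologicalSpace β]

lemma sz_of_isOpen {s : Set α} (hs : IsOpen s) (ξ : Ordinal.{0}) : s ∈ SigmaZero α ξ := by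
  rw [SigmaZero]; exact Or.inl hs

lemma sz_of_form {ξ : Ordinal.{0}} {s : Set α} (g : ℕ → Ordinal.{0}) (f : ℕ → Set α)
    (hg : ∀ n, g n < ξ) (hf : ∀ n, (f n)ᶜ ∈ SigmaZero α (g n)) (hs : s = ⋃ n, f n) :
    s ∈ SigmaZero α ξ := by
  rw [SigmaZero]
  exact Or.inr ⟨fun n => ⟨g n, hg n⟩, f, hf, hs⟩

lemma sz_elim {ξ : Ordinal.{0}} {s : Set α} (hs : s ∈ SigmaZero α ξ) :
    IsOpen s ∨ ∃ g : ℕ → Ordinal.{0}, ∃ f : ℕ → Set α,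
      (∀ n, g n < ξ ∧ (f n)ᶜ ∈ SigmaZero α (g n)) ∧ s = ⋃ n, f n := by
  rw [SigmaZero] at hs
  rcases hs with h | ⟨g, f, hf, hs⟩
  · exact Or.inl h
  · exact Or.inr ⟨fun n => g n, f, fun n => ⟨(g n).2, hf n⟩, hs⟩

lemma sz_compl {ξ : Ordinal.{0}} {s : Set α} (hs : s ∈ SigmaZero α ξ) :
    sᶜ ∈ SigmaZero α (ξ + 1) := by
  refine sz_of_form (fun _ => ξ) (fun _ => sᶜ) (fun _ => ?_) (fun _ => by simpa) (iUnion_const _).symm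
  rw [Ordinal.add_one_eq_succ]
  exact Order.lt_succ ξ

lemma sz_preimage {f : α → β} (hf : Continuous f) :
    ∀ ξ : Ordinal.{0}, ∀ s ∈ SigmaZero β ξ, f ⁻¹' s ∈ SigmaZero α ξ := by
  intro ξ
  induction ξ using Ordinal.induction with
  | h ξ IH =>
    intro s hs
    rcases sz_elim hs with h | ⟨g, F, hF, rfl⟩
    · exact sz_of_isOpen (h.preimage hf) _
    · refine sz_of_form g (fun n => f ⁻¹' F n) (fun n => (hF n).1) (fun n => ?_)
        (by rw [preimage_iUnion])
      rw [← preimage_compl]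
      exact IH _ (hF n).1 _ (hF n).2

lemma isOpen_eq_iUnion_closed [TopologicalSpace.PseudoMetrizableSpace α] {s : Set α}
    (hs : IsOpen s) : ∃ F : ℕ → Set α, (∀ n, IsClosed (F n)) ∧ s = ⋃ n, F n := by
  letI := TopologicalSpace.pseudoMetrizableSpacePseudoMetric α
  obtain ⟨T, hTopen, hTc, hT⟩ : IsGδ sᶜ := hs.isClosed_compl.isGδ
  obtain ⟨f, hf⟩ := (hTc.insert univ).exists_eq_range (insert_nonempty _ _)
  refine ⟨fun n => (f n)ᶜ, fun n => ?_, ?_⟩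
  · have hmem : f n ∈ insert univ T := hf ▸ mem_range_self n
    rcases hmem with h | h
    · show IsClosed (f n)ᶜ
      rw [h, compl_univ]
      exact isClosed_empty
    · exact (hTopen _ h).isClosed_compl
  · have h1 : sᶜ = ⋂ n, f n := by
      rw [hT, ← sInter_range, ← hf, sInter_insert, univ_inter]
    rw [← compl_compl s, h1, compl_iInter]

lemma sz_form_of_pos [TopologicalSpace.PseudoMetrizableSpace α] {ξ : Ordinal.{0}} (hξ : 0 < ξ)
    {s : Set α} (hs : s ∈ SigmaZero α ξ) :
    ∃ g : ℕ → Ordinal.{0}, ∃ f : ℕ → Set α,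
      (∀ n, g n < ξ ∧ (f n)ᶜ ∈ SigmaZero α (g n)) ∧ s = ⋃ n, f n := by
  rcases sz_elim hs with h | h
  · obtain ⟨F, hFc, rfl⟩ := isOpen_eq_iUnion_closed h
    exact ⟨fun _ => 0, F, fun n => ⟨hξ, sz_of_isOpen (hFc n).isOpen_compl 0⟩, rfl⟩
  · exact h

lemma sz_iUnion [TopologicalSpace.PseudoMetrizableSpace α] {ξ : Ordinal.{0}} (s : ℕ → Set α)
    (h : ∀ n, s n ∈ SigmaZero α ξ) : (⋃ n, s n) ∈ SigmaZero α ξ := by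
  rcases eq_or_lt_of_le (zero_le (a := ξ)) with hξ | hξ
  · have hop : ∀ n, IsOpen (s n) := by
      intro n
      rcases sz_elim (h n) with h' | ⟨g, f, hf, hs⟩
      · exact h'
      · exact absurd (hf 0).1 (by rw [← hξ]; exact not_lt_zero)
    exact sz_of_isOpen (isOpen_iUnion hop) _
  · choose g F hgF hs using fun n => sz_form_of_pos hξ (h n)
    refine sz_of_form (fun i => g (Nat.unpair i).1 (Nat.unpair i).2)
      (fun i => F (Nat.unpair i).1 (Nat.unpair i).2)
      (fun i => (hgF _ _).1) (fun i => (hgF _ _).2) ?_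
    ext x
    simp only [mem_iUnion]
    constructor
    · rintro ⟨n, hx⟩
      rw [hs n] at hx
      rcases mem_iUnion.1 hx with ⟨i, hx⟩
      exact ⟨Nat.pair n i, by rwa [Nat.unpair_pair]⟩
    · rintro ⟨p, hp⟩
      exact ⟨(Nat.unpair p).1, by rw [hs]; exact mem_iUnion.2 ⟨(Nat.unpair p).2, hp⟩⟩

lemma sz_iUnion' [TopologicalSpace.PseudoMetrizableSpace α] {ξ : Ordinal.{0}} {ι : Sort*}
    {e : ℕ → ι} (he : Function.Surjective e) (s : ι → Set α)
    (h : ∀ i, s i ∈ SigmaZero α ξ) : (⋃ i, s i) ∈ SigmaZero α ξ := by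
  rw [← he.iUnion_comp]
  exact sz_iUnion _ (fun n => h (e n))

lemma sz_union [TopologicalSpace.PseudoMetrizableSpace α] {ξ : Ordinal.{0}} {s t : Set α}
    (hs : s ∈ SigmaZero α ξ) (ht : t ∈ SigmaZero α ξ) : s ∪ t ∈ SigmaZero α ξ := by
  rw [Set.union_eq_iUnion]
  refine sz_iUnion' (e := fun n => n == 0) ?_ _ ?_
  · intro b; cases b
    · exact ⟨1, rfl⟩
    · exact ⟨0, rfl⟩
  · intro b; cases b
    · exact ht
    · exact hs

end Aux

section Main

variable {X : ℕ → ℕ → Type} [∀ n k, TopologicalSpace (X n k)]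

/-- The basic `Π⁰_{ξ+1}` pieces used to build the covers. -/
def pieceSet (S : ∀ n k, Set (X n k)) (m j : ℕ) : Set (∀ n k, X n k) :=
  {x | (∀ k, x (m + 1) (j + 1 + k) ∈ S (m + 1) (j + 1 + k)) ∧
       ∀ n t, ∃ k, x (m + 1 + n) (t + 1 + k) ∈ S (m + 1 + n) (t + 1 + k)}

lemma pieceSet_compl_mem [∀ n k, PolishSpace (X n k)] {ξ : Ordinal.{0}}
    {S : ∀ n k, Set (X n k)} (hS : ∀ n k, S n k ∈ SigmaZero (X n k) ξ) (m j : ℕ) :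
    (pieceSet S m j)ᶜ ∈ SigmaZero (∀ n k, X n k) (ξ + 1) := by
  have hpre : ∀ n k, ((fun x : ∀ n k, X n k => x n k) ⁻¹' S n k) ∈
      SigmaZero (∀ n k, X n k) ξ :=
    fun n k => sz_preimage ((continuous_apply k).comp (continuous_apply n)) ξ _ (hS n k)
  have key : (pieceSet S m j)ᶜ =
      (⋃ k, ((fun x : ∀ n k, X n k => x (m + 1) (j + 1 + k)) ⁻¹' S (m + 1) (j + 1 + k))ᶜ) ∪
      ⋃ p : ℕ × ℕ,
        (⋃ k, (fun x : ∀ n k, X n k => x (m + 1 + p.1) (p.2 + 1 + k)) ⁻¹'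
          S (m + 1 + p.1) (p.2 + 1 + k))ᶜ := by
    ext x
    simp only [pieceSet, mem_compl_iff, mem_setOf_eq, not_and_or, not_forall, not_exists,
      mem_union, mem_iUnion, mem_preimage, Prod.exists]
  rw [key]
  refine sz_union (sz_iUnion _ fun k => sz_compl (hpre _ _)) ?_
  exact sz_iUnion' (e := fun i => Nat.unpair i)
    (fun p => ⟨Nat.pair p.1 p.2, by simp⟩) _
    (fun p => sz_compl (sz_iUnion _ fun k => hpre _ _))

lemma pieceSet_disjoint_aux (A B : ∀ n k, Set (X n k))
    (hdisj : ∀ n k, Disjoint (A n k) (B n k)) {m j m' j' : ℕ} (hle : m ≤ m')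
    {x : ∀ n k, X n k} (ha : x ∈ pieceSet A m j) (hb : x ∈ pieceSet B m' j') : False := by
  obtain ⟨hb1, -⟩ := hb
  obtain ⟨-, ha2⟩ := ha
  obtain ⟨k, hk⟩ := ha2 (m' - m) j'
  have hrow : m + 1 + (m' - m) = m' + 1 := by omega
  rw [hrow] at hk
  exact Set.disjoint_left.mp (hdisj (m' + 1) (j' + 1 + k)) hk (hb1 k)

end Main

/-- If `A n k` and `B n k` are disjoint `Σ⁰_ξ` subsets of Polish spaces `X n k`, then the
sets `A = {x : ∃m ∀n>m ∃j ∀k>j, x n k ∈ A n k}` and `B` (defined analogously) can be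
covered by disjoint `Σ⁰_{ξ+2}` subsets of the product space. -/
theorem stmt_9 {X : ℕ → ℕ → Type} [∀ n k, TopologicalSpace (X n k)]
    [∀ n k, PolishSpace (X n k)]
    (ξ : Ordinal.{0}) (A B : ∀ n k, Set (X n k))
    (hdisj : ∀ n k, Disjoint (A n k) (B n k))
    (hA : ∀ n k, A n k ∈ SigmaZero (X n k) ξ)
    (hB : ∀ n k, B n k ∈ SigmaZero (X n k) ξ) :
    ∃ A' B' : Set (∀ n k, X n k),
      A' ∈ SigmaZero (∀ n k, X n k) (ξ + 2) ∧
      B' ∈ SigmaZero (∀ n k, X n k) (ξ + 2) ∧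
      Disjoint A' B' ∧
      {x : ∀ n k, X n k | ∃ m, ∀ n > m, ∃ j, ∀ k > j, x n k ∈ A n k} ⊆ A' ∧
      {x : ∀ n k, X n k | ∃ m, ∀ n > m, ∃ j, ∀ k > j, x n k ∈ B n k} ⊆ B' := by
  have hlt : ξ + 1 < ξ + 2 := by
    have h2 : (2 : Ordinal.{0}) = 1 + 1 := by norm_num
    rw [h2, ← add_assoc, Ordinal.add_one_eq_succ]
    exact Order.lt_succ _
  have cover : ∀ (S : ∀ n k, Set (X n k)) (x : ∀ n k, X n k),
      (∃ m, ∀ n > m, ∃ j, ∀ k > j, x n k ∈ S n k) →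
      x ∈ ⋃ i : ℕ, pieceSet S (Nat.unpair i).1 (Nat.unpair i).2 := by
    rintro S x ⟨m, hm⟩
    obtain ⟨j, hj⟩ := hm (m + 1) (Nat.lt_succ_self m)
    refine mem_iUnion.2 ⟨Nat.pair m j, ?_⟩
    rw [Nat.unpair_pair]
    refine ⟨fun k => hj (j + 1 + k) (by omega), fun n t => ?_⟩
    obtain ⟨j', hj'⟩ := hm (m + 1 + n) (by omega)
    exact ⟨j', hj' (t + 1 + j') (by omega)⟩
  refine ⟨⋃ i : ℕ, pieceSet A (Nat.unpair i).1 (Nat.unpair i).2,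
          ⋃ i : ℕ, pieceSet B (Nat.unpair i).1 (Nat.unpair i).2,
          ?_, ?_, ?_, fun x hx => cover A x hx, fun x hx => cover B x hx⟩
  · exact sz_of_form (fun _ => ξ + 1) _ (fun _ => hlt)
      (fun i => pieceSet_compl_mem hA _ _) rfl
  · exact sz_of_form (fun _ => ξ + 1) _ (fun _ => hlt)
      (fun i => pieceSet_compl_mem hB _ _) rfl
  · rw [Set.disjoint_left]
    rintro x hx hx'
    obtain ⟨i, hxa⟩ := mem_iUnion.1 hx
    obtain ⟨i', hxb⟩ := mem_iUnion.1 hx'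
    rcases le_total (Nat.unpair i).1 (Nat.unpair i').1 with h | h
    · exact pieceSet_disjoint_aux A B hdisj h hxa hxb
    · exact pieceSet_disjoint_aux B A (fun n k => (hdisj n k).symm) h hxb hxa
end

section
/- For any x ∈ X^1 = 2^ω and any g : T \ (N_0 ∪ {∅}) → 2^{<ω}, the induced map f_{g,x} restricted to leaf nodes N_0, viewed as an element ρ_g(x) of X^γ, satisfies: if x ∈ F^1 then ρ_g(x) ∈ F^γ, and if x ∈ I^1 then ρ_g(x) ∈ I^γ. Moreover, for fixed g, the map ρ_g : 2^ω → X^γ is continuous. -/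
/-- The iterated Fréchet filter `F^γ`, viewed as a set of labelings of the leaves of the
iterated tree `T_γ` by `0/1` (a labeling is identified with a function `List ℕ → Bool`,
addressed relative to the root; only the values at leaf addresses matter):
`F^0` requires the (root = leaf) value to be `1`, and `f ∈ F^α` iff for all but finitely
many `m`, the labeling of the `m`-th subtree is in `F^{π_α(m)}`. -/
def FTiter (π : Ordinal.{0} → ℕ → Ordinal.{0}) (hπ : ∀ α, α ≠ 0 → ∀ n, π α n < α)
    (α : Ordinal.{0}) : Set (List ℕ → Bool) :=
  if h : α = 0 then {f | f [] = true}
  else {f | ∃ N, ∀ m > N, (fun σ => f (m :: σ)) ∈ FTiter π hπ (π α m)}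
termination_by α
decreasing_by exact hπ α h m

/-- The iterated Fréchet ideal `I^γ`, in the same presentation. -/
def ITiter (π : Ordinal.{0} → ℕ → Ordinal.{0}) (hπ : ∀ α, α ≠ 0 → ∀ n, π α n < α)
    (α : Ordinal.{0}) : Set (List ℕ → Bool) :=
  if h : α = 0 then {f | f [] = false}
  else {f | ∃ N, ∀ m > N, (fun σ => f (m :: σ)) ∈ ITiter π hπ (π α m)}
termination_by α
decreasing_by exact hπ α h m

/-- Auxiliary definition of `f_{g,x}`, by recursion on the reversed address:
`f_{g,x}(i) = x i` at level one, and for a child `σ⌢i` of a node `σ` with `|g(σ)| = n`: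
the value is `g(σ)(i)` if `i < n`, `1 - f_{g,x}(σ)` if `i = n`, and `f_{g,x}(σ)` if
`i > n`. -/
def fgxAux (g : List ℕ → List Bool) (x : ℕ → Bool) : List ℕ → Bool
  | [] => false
  | [i] => x i
  | i :: τ =>
      let p := fgxAux g x τ
      let s := g τ.reverse
      if h : i < s.length then s.get ⟨i, h⟩
      else if i = s.length then !p else p

/-- The map `f_{g,x} : T ∖ {∅} → 2` determined by `x ∈ 2^ω` and
`g : T ∖ (N₀ ∪ {∅}) → 2^{<ω}` (here defined on all addresses). -/
def fgx (g : List ℕ → List Bool) (x : ℕ → Bool) (σ : List ℕ) : Bool :=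
  fgxAux g x σ.reverse

lemma fgxAux_cons (g : List ℕ → List Bool) (x : ℕ → Bool) (i a : ℕ) (l : List ℕ) :
    fgxAux g x (i :: a :: l) =
      if h : i < (g (a :: l).reverse).length then (g (a :: l).reverse).get ⟨i, h⟩
      else if i = (g (a :: l).reverse).length then !(fgxAux g x (a :: l))
      else fgxAux g x (a :: l) := rfl

lemma fgx_child (g : List ℕ → List Bool) (x : ℕ → Bool) (σ : List ℕ) (hσ : σ ≠ [])
    (m : ℕ) (hm : (g σ).length < m) : fgx g x (σ ++ [m]) = fgx g x σ := by
  obtain ⟨a, l, h⟩ : ∃ a l, σ.reverse = a :: l := by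
    cases hr : σ.reverse with
    | nil => exact absurd (by simpa using congrArg List.reverse hr) hσ
    | cons a l => exact ⟨a, l, rfl⟩
  unfold fgx
  rw [List.reverse_append, List.reverse_singleton, List.singleton_append, h, fgxAux_cons,
    ← h, List.reverse_reverse]
  rw [dif_neg (by omega), if_neg (by omega), h]

lemma cont_aux (g : List ℕ → List Bool) :
    ∀ l : List ℕ, Continuous fun x : ℕ → Bool => fgxAux g x l
  | [] => continuous_const
  | [i] => continuous_apply i
  | i :: a :: l => by
      have hp := cont_aux g (a :: l)
      simp only [fgxAux_cons]
      split_ifs with h1 h2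
      · exact continuous_const
      · exact Continuous.comp (continuous_of_discreteTopology (f := Bool.not)) hp
      · exact hp

lemma memF (π : Ordinal.{0} → ℕ → Ordinal.{0}) (hπ : ∀ α, α ≠ 0 → ∀ n, π α n < α) :
    ∀ α, ∀ (g : List ℕ → List Bool) (x : ℕ → Bool) (σ : List ℕ), σ ≠ [] →
      fgx g x σ = true → (fun τ => fgx g x (σ ++ τ)) ∈ FTiter π hπ α := by
  intro α
  induction α using Ordinal.induction with
  | h α IH =>
    intro g x σ hσ hv
    by_cases h0 : α = 0
    · rw [FTiter, dif_pos h0]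
      simpa using hv
    · rw [FTiter, dif_neg h0]
      refine ⟨(g σ).length, fun m hm => ?_⟩
      have he : (fun τ => fgx g x (σ ++ m :: τ)) = fun τ => fgx g x ((σ ++ [m]) ++ τ) := by
        funext τ; simp
      rw [he]
      exact IH (π α m) (hπ α h0 m) g x (σ ++ [m]) (by simp)
        (by rw [fgx_child g x σ hσ m hm]; exact hv)

lemma memI (π : Ordinal.{0} → ℕ → Ordinal.{0}) (hπ : ∀ α, α ≠ 0 → ∀ n, π α n < α) :
    ∀ α, ∀ (g : List ℕ → List Bool) (x : ℕ → Bool) (σ : List ℕ), σ ≠ [] →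
      fgx g x σ = false → (fun τ => fgx g x (σ ++ τ)) ∈ ITiter π hπ α := by
  intro α
  induction α using Ordinal.induction with
  | h α IH =>
    intro g x σ hσ hv
    by_cases h0 : α = 0
    · rw [ITiter, dif_pos h0]
      simpa using hv
    · rw [ITiter, dif_neg h0]
      refine ⟨(g σ).length, fun m hm => ?_⟩
      have he : (fun τ => fgx g x (σ ++ m :: τ)) = fun τ => fgx g x ((σ ++ [m]) ++ τ) := by
        funext τ; simp
      rw [he]
      exact IH (π α m) (hπ α h0 m) g x (σ ++ [m]) (by simp)
        (by rw [fgx_child g x σ hσ m hm]; exact hv)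

/-- For any `g`, the map `ρ_g : 2^ω → X^γ ≅ 2^{N₀}`, `x ↦ f_{g,x} ↾ N₀`, is continuous,
sends the Fréchet filter `F¹` into `F^γ`, and sends the Fréchet ideal `I¹` into `I^γ`. -/
theorem stmt_14
    (π : Ordinal.{0} → ℕ → Ordinal.{0})
    (hπlt : ∀ α, α ≠ 0 → ∀ n, π α n < α)
    (hπsucc : ∀ (β : Ordinal.{0}) (n : ℕ), π (β + 1) n = β)
    (hπlim : ∀ α : Ordinal.{0}, Order.IsSuccLimit α →
      StrictMono (π α) ∧ ∀ β < α, ∃ n, β ≤ π α n)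
    (γ : Ordinal.{0}) (hγ : γ ≠ 0) (hγc : γ.card ≤ Cardinal.aleph0) :
    (∀ g : List ℕ → List Bool, Continuous (fun x : ℕ → Bool => fgx g x)) ∧
    (∀ (g : List ℕ → List Bool) (x : ℕ → Bool),
      (∀ᶠ n in Filter.atTop, x n = true) → fgx g x ∈ FTiter π hπlt γ) ∧
    (∀ (g : List ℕ → List Bool) (x : ℕ → Bool),
      (∀ᶠ n in Filter.atTop, x n = false) → fgx g x ∈ ITiter π hπlt γ) := by
  refine ⟨fun g => continuous_pi fun σ => cont_aux g σ.reverse, ?_, ?_⟩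
  · intro g x hx
    obtain ⟨N, hN⟩ := Filter.eventually_atTop.mp hx
    rw [FTiter, dif_neg hγ]
    refine ⟨N, fun m hm => ?_⟩
    have he : (fun σ => fgx g x (m :: σ)) = fun τ => fgx g x ([m] ++ τ) := rfl
    rw [he]
    exact memF π hπlt (π γ m) g x [m] (by simp) (hN m hm.le)
  · intro g x hx
    obtain ⟨N, hN⟩ := Filter.eventually_atTop.mp hx
    rw [ITiter, dif_neg hγ]
    refine ⟨N, fun m hm => ?_⟩
    have he : (fun σ => fgx g x (m :: σ)) = fun τ => fgx g x ([m] ++ τ) := rfl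
    rw [he]
    exact memI π hπlt (π γ m) g x [m] (by simp) (hN m hm.le)
end
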